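/- arXiv:1808.09898 — 8 statements merged into one kernel-verified Lean document; each statement's English description precedes it below -/
import Mathlib

section
/- Let X be a metric space with a partial order making it L-ordered, and let p and q be Radon Borel probability measures on X with finite first moment. Suppose p ≠ q and there exists a coupling of p and q supported on {(x,y) : x ≤ y}. Then there exists a monotone 1-Lipschitz function f : X → ℝ with ∫_X f dp < ∫_X f dq (strict inequality). -/
open MeasureTheory
open scoped ENNReal

/-- A coupling of two Borel probability measures `p` and `q` on `Z` is a measure on
`Z × Z` whose marginals (pushforwards along the projections) are `p` and `q`. -/
def IsCoupling {Z : Type*} [MeasurableSpace Z] (r : Measure (Z × Z)) (p q : Measure Z) : Prop :=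
  r.map Prod.fst = p ∧ r.map Prod.snd = q

-- auxiliary: integrability of Lipschitz functions against measures with finite first moment
lemma lipschitz_integrable {X : Type*} [MetricSpace X]
    [MeasurableSpace X] [BorelSpace X] (p : Measure X) [IsProbabilityMeasure p]
    (hpM : ∀ x₀ : X, Integrable (fun x => dist x x₀) p)
    (x₀ : X) (f : X → ℝ) (hf : LipschitzWith 1 f) : Integrable f p := by
  have hc : Continuous f := hf.continuous
  refine Integrable.mono' ((integrable_const |f x₀|).add (hpM x₀))
    hc.aestronglyMeasurable (Filter.Eventually.of_forall fun x => ?_)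
  have h1 : dist (f x) (f x₀) ≤ dist x x₀ := by
    simpa using hf.dist_le_mul x x₀
  rw [Real.dist_eq] at h1
  have : |f x| ≤ |f x₀| + |f x - f x₀| := by
    have := abs_sub_abs_le_abs_sub (f x) (f x₀)
    linarith [abs_nonneg (f x - f x₀)]
  calc ‖f x‖ = |f x| := rfl
    _ ≤ |f x₀| + |f x - f x₀| := this
    _ ≤ |f x₀| + dist x x₀ := by linarith

/-- On an L-ordered metric space, if `p < q` strictly in the stochastic order, then some
monotone 1-Lipschitz function has strictly smaller integral against `p` than against `q`. -/
theorem exists_strict_monotone_integral_of_strict_stochastic_order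
    {X : Type*} [MetricSpace X] [PartialOrder X]
    [MeasurableSpace X] [BorelSpace X]
    (hL : ∀ x y : X, x ≤ y ↔ ∀ f : X → ℝ, Monotone f → LipschitzWith 1 f → f x ≤ f y)
    (p q : Measure X) [IsProbabilityMeasure p] [IsProbabilityMeasure q]
    (hpR : p.InnerRegular) (hqR : q.InnerRegular)
    (hpM : ∀ x₀ : X, Integrable (fun x => dist x x₀) p)
    (hqM : ∀ x₀ : X, Integrable (fun x => dist x x₀) q)
    (hne : p ≠ q)
    (hcoup : ∃ r : Measure (X × X), IsCoupling r p q ∧ r {z : X × X | z.1 ≤ z.2}ᶜ = 0) :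
    ∃ f : X → ℝ, Monotone f ∧ LipschitzWith 1 f ∧ (∫ x, f x ∂p) < ∫ x, f x ∂q := by
  by_contra hcon
  push_neg at hcon
  obtain ⟨r, ⟨hr1, hr2⟩, hrs⟩ := hcoup
  -- X is nonempty
  have hXne : Nonempty X := by
    by_contra hXe
    rw [not_nonempty_iff] at hXe
    have h1 : p Set.univ = 1 := measure_univ
    rw [Set.univ_eq_empty_iff.mpr hXe] at h1
    simp at h1
  obtain ⟨x₀⟩ := hXne
  -- ae ordering under r
  have haeLe : ∀ᵐ z ∂r, (z : X × X).1 ≤ z.2 := by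
    rw [MeasureTheory.ae_iff]
    exact hrs
  -- key: for every monotone 1-Lipschitz f, r {z | f z.1 < f z.2} = 0
  have key : ∀ f : X → ℝ, Monotone f → LipschitzWith 1 f →
      r {z : X × X | f z.1 < f z.2} = 0 := by
    intro f hmono hlip
    have hfp : Integrable f p := lipschitz_integrable p hpM x₀ f hlip
    have hfq : Integrable f q := lipschitz_integrable q hqM x₀ f hlip
    have hms : AEStronglyMeasurable f p := hfp.aestronglyMeasurable
    have hfst : Integrable (f ∘ Prod.fst) r := by
      have := hfp
      rw [← hr1] at this
      exact this.comp_aemeasurable measurable_fst.aemeasurable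
    have hsnd : Integrable (f ∘ Prod.snd) r := by
      have := hfq
      rw [← hr2] at this
      exact this.comp_aemeasurable measurable_snd.aemeasurable
    have hIp : ∫ z, f z.1 ∂r = ∫ x, f x ∂p := by
      rw [← hr1, integral_map measurable_fst.aemeasurable]
      · rw [← hr1] at hfp; exact hfp.aestronglyMeasurable
    have hIq : ∫ z, f z.2 ∂r = ∫ x, f x ∂q := by
      rw [← hr2, integral_map measurable_snd.aemeasurable]
      · rw [← hr2] at hfq; exact hfq.aestronglyMeasurable
    have hfst' : Integrable (fun z : X × X => f z.1) r := hfst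
    have hsnd' : Integrable (fun z : X × X => f z.2) r := hsnd
    set g : X × X → ℝ := fun z => f z.2 - f z.1 with hg
    have hgint : Integrable g r := hsnd'.sub hfst'
    have hgnn : 0 ≤ᵐ[r] g := by
      filter_upwards [haeLe] with z hz
      simp only [hg, Pi.zero_apply, sub_nonneg]
      exact hmono hz
    have hgI : ∫ z, g z ∂r = 0 := by
      have h1 : ∫ z, g z ∂r = (∫ x, f x ∂q) - ∫ x, f x ∂p := by
        rw [hg]
        rw [integral_sub hsnd' hfst']
        rw [hIq, hIp]
      have h2 : (0:ℝ) ≤ ∫ z, g z ∂r := integral_nonneg_of_ae hgnn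
      have h3 := hcon f hmono hlip
      linarith [h1 ▸ h2, h3, h1]
    have hg0 : g =ᵐ[r] 0 := (integral_eq_zero_iff_of_nonneg_ae hgnn hgint).mp hgI
    have : r {z : X × X | g z ≠ 0} = 0 := by
      rw [← MeasureTheory.ae_iff] at *
      filter_upwards [hg0] with z hz
      simpa using hz
    refine measure_mono_null ?_ this
    intro z hz
    simp only [Set.mem_setOf_eq, hg] at *
    intro h
    rw [sub_eq_zero] at h
    exact absurd (h ▸ hz) (lt_irrefl _)
  -- r is a probability measure
  haveI hrprob : IsProbabilityMeasure r := by
    constructor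
    have h1 : p Set.univ = 1 := measure_univ
    rw [← hr1, Measure.map_apply measurable_fst MeasurableSet.univ] at h1
    simpa using h1
  -- sigma-compact carriers for p and q
  have hfull : ∀ m : Measure X, m.InnerRegular → IsProbabilityMeasure m →
      ∃ S : Set X, TopologicalSpace.IsSeparable S ∧ MeasurableSet S ∧ m Sᶜ = 0 := by
    intro m hmR hmP
    have h1 : ∀ n : ℕ, ∃ K : Set X, IsCompact K ∧ m Kᶜ ≤ ((n : ℝ≥0∞) + 1)⁻¹ := by
      intro n
      have hlt : (1 : ℝ≥0∞) - ((n : ℝ≥0∞) + 1)⁻¹ < m Set.univ := by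
        rw [hmP.measure_univ]
        exact ENNReal.sub_lt_self ENNReal.one_ne_top one_ne_zero
          (ENNReal.inv_ne_zero.mpr (by simp))
      obtain ⟨K, -, hKc, hK⟩ := hmR.innerRegular MeasurableSet.univ _ hlt
      refine ⟨K, hKc, ?_⟩
      have hKm : MeasurableSet K := hKc.isClosed.measurableSet
      rw [measure_compl hKm (measure_ne_top m K), hmP.measure_univ]
      rw [tsub_le_iff_right, add_comm]
      exact tsub_le_iff_right.mp hK.le
    choose K hKc hKm using h1
    refine ⟨⋃ n, K n, TopologicalSpace.IsSeparable.iUnion fun n => (hKc n).isSeparable,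
      MeasurableSet.iUnion fun n => (hKc n).isClosed.measurableSet, ?_⟩
    by_contra h0
    obtain ⟨n, hn⟩ := ENNReal.exists_inv_nat_lt h0
    have h2 : m (⋃ n, K n)ᶜ ≤ ((n : ℝ≥0∞) + 1)⁻¹ := by
      refine le_trans (measure_mono ?_) (hKm n)
      rw [Set.compl_subset_compl]
      exact Set.subset_iUnion K n
    have h3 : ((n : ℝ≥0∞) + 1)⁻¹ ≤ ((n : ℝ≥0∞))⁻¹ :=
      ENNReal.inv_le_inv.mpr (by simp)
    exact absurd ((h2.trans h3).trans_lt hn) (lt_irrefl _)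
  obtain ⟨Sp, hSpsep, hSpm, hSp0⟩ := hfull p hpR inferInstance
  obtain ⟨Sq, hSqsep, hSqm, hSq0⟩ := hfull q hqR inferInstance
  have hSnull : r (Sp ×ˢ Sq)ᶜ = 0 := by
    have h1 : r (Prod.fst ⁻¹' Spᶜ) = 0 := by
      rw [← hr1, Measure.map_apply measurable_fst hSpm.compl] at hSp0
      exact hSp0
    have h2 : r (Prod.snd ⁻¹' Sqᶜ) = 0 := by
      rw [← hr2, Measure.map_apply measurable_snd hSqm.compl] at hSq0
      exact hSq0
    refine measure_mono_null (fun z hz => ?_) (measure_union_null h1 h2)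
    simp only [Set.mem_compl_iff, Set.mem_prod, not_and_or] at hz
    simpa using hz
  -- choose separating functions
  have hF : ∀ z : X × X, ∃ f : X → ℝ, Monotone f ∧ LipschitzWith 1 f ∧
      (z.1 < z.2 → f z.1 < f z.2) := by
    intro z
    by_cases hz : z.1 < z.2
    · have hnle : ¬ z.2 ≤ z.1 := not_le_of_gt hz
      rw [hL] at hnle
      push_neg at hnle
      obtain ⟨f, hf1, hf2, hf3⟩ := hnle
      exact ⟨f, hf1, hf2, fun _ => hf3⟩
    · exact ⟨fun _ => 0, monotone_const, (LipschitzWith.const (0:ℝ)).weaken zero_le_one, fun h => absurd h hz⟩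
  choose F hFmono hFlip hFgap using hF
  -- the set of strictly ordered pairs inside the separable carrier is null
  have hAnull : r {z : X × X | z ∈ Sp ×ˢ Sq ∧ z.1 < z.2} = 0 := by
    have hAsub : {z : X × X | z ∈ Sp ×ˢ Sq ∧ z.1 < z.2} ⊆
        ⋃ n : ℕ, {z : X × X | (z ∈ Sp ×ˢ Sq ∧ z.1 < z.2) ∧
          1 / ((n : ℝ) + 1) < F z z.2 - F z z.1} := by
      intro z hz
      obtain ⟨n, hn⟩ := exists_nat_one_div_lt (sub_pos.mpr (hFgap z hz.2))
      exact Set.mem_iUnion.mpr ⟨n, hz, hn⟩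
    refine measure_mono_null hAsub (measure_iUnion_null fun n => ?_)
    have hAnsep : TopologicalSpace.IsSeparable {z : X × X | (z ∈ Sp ×ˢ Sq ∧ z.1 < z.2) ∧
        1 / ((n : ℝ) + 1) < F z z.2 - F z z.1} :=
      (hSpsep.prod hSqsep).mono (fun z hz => hz.1.1)
    obtain ⟨T, hTsub, hTcount, hTdense⟩ := hAnsep.exists_countable_dense_subset
    refine measure_mono_null (fun z hz => ?_)
      ((measure_biUnion_null_iff hTcount).mpr fun t _ =>
        key (F t) (hFmono t) (hFlip t))
    have hzcl := hTdense hz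
    rw [Metric.mem_closure_iff] at hzcl
    obtain ⟨t, htT, hdist⟩ := hzcl (1 / (3 * ((n : ℝ) + 1))) (by positivity)
    refine Set.mem_biUnion htT ?_
    have htgap : 1 / ((n : ℝ) + 1) < F t t.2 - F t t.1 := (hTsub htT).2
    have h1 : dist z.1 t.1 < 1 / (3 * ((n : ℝ) + 1)) :=
      lt_of_le_of_lt (by rw [Prod.dist_eq]; exact le_max_left _ _) hdist
    have h2 : dist z.2 t.2 < 1 / (3 * ((n : ℝ) + 1)) :=
      lt_of_le_of_lt (by rw [Prod.dist_eq]; exact le_max_right _ _) hdist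
    have hb1 : |F t z.1 - F t t.1| ≤ dist z.1 t.1 := by
      have := (hFlip t).dist_le_mul z.1 t.1
      rwa [Real.dist_eq, NNReal.coe_one, one_mul] at this
    have hb2 : |F t z.2 - F t t.2| ≤ dist z.2 t.2 := by
      have := (hFlip t).dist_le_mul z.2 t.2
      rwa [Real.dist_eq, NNReal.coe_one, one_mul] at this
    have hb1' := abs_le.mp hb1
    have hb2' := abs_le.mp hb2
    have hnn : (0 : ℝ) < (n : ℝ) + 1 := by positivity
    show F t z.1 < F t z.2
    have h3 : 1 / ((n : ℝ) + 1) = 3 * (1 / (3 * ((n : ℝ) + 1))) := by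
      field_simp
    have h4 : (0 : ℝ) < 1 / (3 * ((n : ℝ) + 1)) := by positivity
    linarith [hb1'.2, hb2'.1, h1, h2, htgap]
  -- r is concentrated on the diagonal
  have hdiagc : r {z : X × X | z.1 ≠ z.2} = 0 := by
    refine measure_mono_null (fun z hz => ?_)
      (measure_union_null (measure_union_null hrs hSnull) hAnull)
    by_cases h1 : z.1 ≤ z.2
    · by_cases h2 : z ∈ Sp ×ˢ Sq
      · exact Or.inr ⟨h2, lt_of_le_of_ne h1 hz⟩
      · exact Or.inl (Or.inr h2)
    · exact Or.inl (Or.inl h1)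
  have haeeq : ∀ᵐ z ∂r, (z : X × X).1 = z.2 := by
    rw [MeasureTheory.ae_iff]
    exact hdiagc
  refine absurd ?_ hne
  ext s hs
  rw [← hr1, ← hr2, Measure.map_apply measurable_fst hs, Measure.map_apply measurable_snd hs]
  apply measure_congr
  filter_upwards [haeeq] with z hz
  show (z.1 ∈ s) = (z.2 ∈ s)
  rw [hz]
end

section
/- Antisymmetry of the stochastic order: Let X be a metric space with a partial order making it L-ordered, and let p and q be Radon Borel probability measures on X with finite first moment. If there exist both a coupling of p and q supported on {(x,y) : x ≤ y} and a coupling of q and p supported on {(x,y) : x ≤ y}, then p = q. -/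
open MeasureTheory ENNReal

theorem LipschitzWith.sub_le_dist {X : Type*} [PseudoMetricSpace X] {f : X → ℝ}
    (hf : LipschitzWith 1 f) (x y : X) : f x - f y ≤ dist x y := by
  simpa using sub_le_iff_le_add'.2 (hf.le_add_mul x y)

section OrderedDist

variable {X : Type*} [PseudoMetricSpace X] [Preorder X]

noncomputable def orderedDist (a x : X) : ℝ :=
  ⨆ f : {f : X → ℝ // Monotone f ∧ LipschitzWith 1 f}, f.1 x - f.1 a

instance : Nonempty {f : X → ℝ // Monotone f ∧ LipschitzWith 1 f} :=
  ⟨⟨fun _ => 0, monotone_const, LipschitzWith.const' 0⟩⟩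

theorem bddAbove_range_monotoneLipschitz_sub (a x : X) :
    BddAbove (Set.range fun f : {f : X → ℝ // Monotone f ∧ LipschitzWith 1 f} => f.1 x - f.1 a) :=
  ⟨dist x a, by rintro _ ⟨f, rfl⟩; exact f.2.2.sub_le_dist x a⟩

theorem sub_le_orderedDist {f : X → ℝ} (hm : Monotone f) (hl : LipschitzWith 1 f) (a x : X) :
    f x - f a ≤ orderedDist a x :=
  le_ciSup (bddAbove_range_monotoneLipschitz_sub a x) ⟨f, hm, hl⟩

theorem orderedDist_le_dist (a x : X) : orderedDist a x ≤ dist x a :=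
  ciSup_le fun f => f.2.2.sub_le_dist x a

theorem monotone_orderedDist (a : X) : Monotone (orderedDist a) := fun _ y hxy =>
  ciSup_le fun f => (sub_le_sub_right (f.2.1 hxy) _).trans (sub_le_orderedDist f.2.1 f.2.2 a y)

theorem lipschitzWith_orderedDist (a : X) : LipschitzWith 1 (orderedDist a) :=
  LipschitzWith.of_le_add fun x y => ciSup_le fun f => by
    have hxy := f.2.2.sub_le_dist x y
    have hy := sub_le_orderedDist f.2.1 f.2.2 a y
    linarith

theorem le_of_forall_orderedDist_le
    (hL : ∀ x y : X, (∀ f : X → ℝ, Monotone f → LipschitzWith 1 f → f x ≤ f y) → x ≤ y)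
    {c : Set X} {x y : X} (hx : x ∈ closure c) (h : ∀ a ∈ c, orderedDist a y ≤ orderedDist a x) :
    y ≤ x := by
  refine hL y x fun f hm hl => ?_
  have hc : c ⊆ {a | f y ≤ f x + 2 * dist x a} := fun a ha => by
    show f y ≤ f x + 2 * dist x a
    have hya := sub_le_orderedDist hm hl a y
    have hxa := orderedDist_le_dist a x
    have hax := hl.sub_le_dist a x
    rw [dist_comm] at hax
    linarith [h a ha]
  have hclosed : IsClosed {a | f y ≤ f x + 2 * dist x a} :=
    isClosed_le continuous_const (by fun_prop)
  simpa using closure_minimal hc hclosed hx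

end OrderedDist

theorem LipschitzWith.integrable_of_integrable_dist {X : Type*} [PseudoMetricSpace X]
    [MeasurableSpace X] [OpensMeasurableSpace X] {μ : Measure X} [IsFiniteMeasure μ]
    {f : X → ℝ} {K : NNReal} (hf : LipschitzWith K f) {x₀ : X}
    (hμ : Integrable (fun x => dist x x₀) μ) : Integrable f μ := by
  refine ((integrable_const |f x₀|).add (hμ.const_mul K)).mono'
    hf.continuous.aestronglyMeasurable (ae_of_all _ fun x => ?_)
  calc ‖f x‖ = |f x₀ + (f x - f x₀)| := by rw [Real.norm_eq_abs, add_sub_cancel]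
    _ ≤ |f x₀| + |f x - f x₀| := abs_add_le _ _
    _ ≤ |f x₀| + K * dist x x₀ := by gcongr; exact hf.dist_le_mul x x₀

theorem exists_countable_ae_mem_closure {X : Type*} [TopologicalSpace X] [T2Space X]
    [TopologicalSpace.PseudoMetrizableSpace X] [MeasurableSpace X] [OpensMeasurableSpace X]
    (μ : Measure X) [IsFiniteMeasure μ] [μ.InnerRegularCompactLTTop] :
    ∃ c : Set X, c.Countable ∧ ∀ᵐ x ∂μ, x ∈ closure c := by
  have hK (n : ℕ) : ∃ K, K ⊆ Set.univ ∧ IsCompact K ∧ μ (Set.univ \ K) < (n : ℝ≥0∞)⁻¹ :=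
    MeasurableSet.univ.exists_isCompact_sdiff_lt (measure_ne_top μ _)
      (ENNReal.inv_ne_zero.2 (natCast_ne_top n))
  choose K _ hKc hKμ using hK
  have hnull : μ (⋃ n, K n)ᶜ = 0 := by
    by_contra hne
    obtain ⟨n, hn⟩ := ENNReal.exists_inv_nat_lt hne
    have hsub : (⋃ n, K n)ᶜ ⊆ Set.univ \ K n := fun x hx =>
      ⟨trivial, fun hxK => hx (Set.mem_iUnion_of_mem n hxK)⟩
    exact lt_irrefl _ (((measure_mono hsub).trans_lt (hKμ n)).trans hn)
  obtain ⟨c, hc, hsub⟩ := TopologicalSpace.IsSeparable.iUnion fun n => (hKc n).isSeparable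
  exact ⟨c, hc, measure_mono_null (Set.compl_subset_compl.2 hsub) hnull⟩

namespace IsCoupling

variable {Z : Type*} [MeasurableSpace Z] {r : Measure (Z × Z)} {p q : Measure Z}

theorem integral_comp_fst (hc : IsCoupling r p q) {f : Z → ℝ} (hf : AEStronglyMeasurable f p) :
    ∫ z, f z.1 ∂r = ∫ x, f x ∂p := by
  rw [← hc.1] at hf ⊢
  exact (integral_map measurable_fst.aemeasurable hf).symm

theorem integral_comp_snd (hc : IsCoupling r p q) {f : Z → ℝ} (hf : AEStronglyMeasurable f q) :
    ∫ z, f z.2 ∂r = ∫ x, f x ∂q := by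
  rw [← hc.2] at hf ⊢
  exact (integral_map measurable_snd.aemeasurable hf).symm

theorem integrable_comp_fst (hc : IsCoupling r p q) {f : Z → ℝ} (hf : Integrable f p) :
    Integrable (fun z => f z.1) r := by
  rw [← hc.1] at hf
  exact hf.comp_measurable measurable_fst

theorem integrable_comp_snd (hc : IsCoupling r p q) {f : Z → ℝ} (hf : Integrable f q) :
    Integrable (fun z => f z.2) r := by
  rw [← hc.2] at hf
  exact hf.comp_measurable measurable_snd

theorem ae_comp_fst (hc : IsCoupling r p q) {P : Z → Prop} (h : ∀ᵐ x ∂p, P x) :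
    ∀ᵐ z ∂r, P z.1 :=
  ae_of_ae_map measurable_fst.aemeasurable (hc.1 ▸ h)

theorem integral_mono (hc : IsCoupling r p q) {f : Z → ℝ} (hp : Integrable f p)
    (hq : Integrable f q) (hle : ∀ᵐ z ∂r, f z.1 ≤ f z.2) : ∫ x, f x ∂p ≤ ∫ x, f x ∂q := by
  rw [← hc.integral_comp_fst hp.1, ← hc.integral_comp_snd hq.1]
  exact integral_mono_ae (hc.integrable_comp_fst hp) (hc.integrable_comp_snd hq) hle

theorem ae_eq_of_integral_eq (hc : IsCoupling r p q) {f : Z → ℝ} (hp : Integrable f p)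
    (hq : Integrable f q) (hle : ∀ᵐ z ∂r, f z.1 ≤ f z.2)
    (heq : ∫ x, f x ∂p = ∫ x, f x ∂q) : ∀ᵐ z ∂r, f z.1 = f z.2 := by
  rw [← hc.integral_comp_fst hp.1, ← hc.integral_comp_snd hq.1] at heq
  exact (integral_eq_iff_of_ae_le (hc.integrable_comp_fst hp) (hc.integrable_comp_snd hq)
    hle).1 heq

theorem eq_of_ae_eq (hc : IsCoupling r p q) (h : ∀ᵐ z ∂r, z.1 = z.2) : p = q := by
  rw [← hc.1, ← hc.2]
  exact Measure.map_congr h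

end IsCoupling

theorem stochastic_order_antisymm_general
    {X : Type*} [MetricSpace X] [PartialOrder X]
    [MeasurableSpace X] [BorelSpace X]
    (hL : ∀ x y : X, x ≤ y ↔ ∀ f : X → ℝ, Monotone f → LipschitzWith 1 f → f x ≤ f y)
    (p q : Measure X) [IsProbabilityMeasure p] [IsProbabilityMeasure q]
    (hpR : p.InnerRegular)
    (hpM : ∀ x₀ : X, Integrable (fun x => dist x x₀) p)
    (hqM : ∀ x₀ : X, Integrable (fun x => dist x x₀) q)
    (hpq : ∃ r : Measure (X × X), IsCoupling r p q ∧ r {z : X × X | z.1 ≤ z.2}ᶜ = 0)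
    (hqp : ∃ r : Measure (X × X), IsCoupling r q p ∧ r {z : X × X | z.1 ≤ z.2}ᶜ = 0) :
    p = q := by
  obtain ⟨r, hr, hr_le⟩ := hpq
  obtain ⟨s, hs, hs_le⟩ := hqp
  have hle_r : ∀ᵐ z ∂r, z.1 ≤ z.2 := ae_iff.2 hr_le
  have hle_s : ∀ᵐ z ∂s, z.1 ≤ z.2 := ae_iff.2 hs_le
  have hgap (a : X) : ∀ᵐ z ∂r, orderedDist a z.1 = orderedDist a z.2 := by
    have hp := (lipschitzWith_orderedDist a).integrable_of_integrable_dist (hpM a)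
    have hq := (lipschitzWith_orderedDist a).integrable_of_integrable_dist (hqM a)
    have hmono_r := hle_r.mono fun z hz => monotone_orderedDist a hz
    have hmono_s := hle_s.mono fun z hz => monotone_orderedDist a hz
    exact hr.ae_eq_of_integral_eq hp hq hmono_r
      (le_antisymm (hr.integral_mono hp hq hmono_r) (hs.integral_mono hq hp hmono_s))
  obtain ⟨c, hc, hpc⟩ := exists_countable_ae_mem_closure p
  have hgap_c := (ae_ball_iff hc).2 fun a _ => hgap a
  refine hr.eq_of_ae_eq ?_
  filter_upwards [hle_r, hr.ae_comp_fst hpc, hgap_c] with z hz_le hz_mem hz_gap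
  exact le_antisymm hz_le
    (le_of_forall_orderedDist_le (fun x y => (hL x y).2) hz_mem fun a ha => (hz_gap a ha).ge)

/-- Antisymmetry of the stochastic order on an L-ordered metric space: if `p ≤ q` and
`q ≤ p` in the stochastic order, then `p = q`. -/
theorem stochastic_order_antisymm
    {X : Type*} [MetricSpace X] [PartialOrder X]
    [MeasurableSpace X] [BorelSpace X]
    (hL : ∀ x y : X, x ≤ y ↔ ∀ f : X → ℝ, Monotone f → LipschitzWith 1 f → f x ≤ f y)
    (p q : Measure X) [IsProbabilityMeasure p] [IsProbabilityMeasure q]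
    (hpR : p.InnerRegular) (hqR : q.InnerRegular)
    (hpM : ∀ x₀ : X, Integrable (fun x => dist x x₀) p)
    (hqM : ∀ x₀ : X, Integrable (fun x => dist x x₀) q)
    (hpq : ∃ r : Measure (X × X), IsCoupling r p q ∧ r {z : X × X | z.1 ≤ z.2}ᶜ = 0)
    (hqp : ∃ r : Measure (X × X), IsCoupling r q p ∧ r {z : X × X | z.1 ≤ z.2}ᶜ = 0) :
    p = q :=
  stochastic_order_antisymm_general hL p q hpR hpM hqM hpq hqp
end

section
/- Splitting Lemma: Let X be an ordered metric space (partial order with closed graph). Let n, m ≥ 1 and let x : Fin n → X and y : Fin m → X be tuples. Then the empirical distribution i_n(x) is below i_m(y) in the stochastic order (i.e. there is a coupling of i_n(x) and i_m(y) supported on {(a,b) : a ≤ b}) if and only if there exist k ≥ 1 and maps φ : Fin k → Fin n and ψ : Fin k → Fin m, each having all fibers of equal cardinality (|φ⁻¹(i)| is the same for all i ∈ Fin n, and |ψ⁻¹(j)| is the same for all j ∈ Fin m), such that x(φ(l)) ≤ y(ψ(l)) for all l ∈ Fin k. -/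
open MeasureTheory

/-- The empirical distribution of a tuple `x : Fin n → X`: the uniform average
`(1/n) ∑ i, δ_{x i}` of Dirac measures. -/
noncomputable def empDist {X : Type*} [MeasurableSpace X] {n : ℕ} (x : Fin n → X) :
    Measure X :=
  ((n : ENNReal))⁻¹ • ∑ i : Fin n, Measure.dirac (x i)

/-!
A coupling supported on `{a ≤ b}` gives Hall's condition `m * |A| ≤ n * |N(A)|` for the relation
`x i ≤ y j`, where `N(A)` is the set of `j` above some `i ∈ A`. Blowing every `i` up into `m` copies
and every `j` into `n` copies turns this into the plain marriage condition, so Hall's theorem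
yields a bijection `Fin n × Fin m ≃ Fin m × Fin n` respecting the relation; read through
`Fin (n * m)` it is the required pair `φ, ψ`. Conversely, when `φ` and `ψ` have fibres of equal
size the empirical distribution of the pairs `(x (φ l), y (ψ l))` is a coupling, since
`i_k(x ∘ φ) = i_n(x)`.
-/

open Finset ENNReal

section EmpDist

variable {X Y : Type*} [MeasurableSpace X] [MeasurableSingletonClass X] {n : ℕ}

theorem empDist_apply (x : Fin n → X) (s : Set X) [DecidablePred (· ∈ s)] :
    empDist x s = (n : ℝ≥0∞)⁻¹ * #{i | x i ∈ s} := by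
  simp [empDist, Measure.dirac_apply, Set.indicator_apply, Finset.sum_boole]

theorem map_empDist [MeasurableSpace Y] [MeasurableSingletonClass Y] (x : Fin n → X) {F : X → Y}
    (hF : Measurable F) : (empDist x).map F = empDist (F ∘ x) := by
  classical
  ext s hs
  rw [Measure.map_apply hF hs, empDist_apply, empDist_apply]
  rfl

end EmpDist

theorem empDist_comp_of_card_fiber_eq {X : Type*} [MeasurableSpace X] {k n c : ℕ} (hc : c ≠ 0)
    (φ : Fin k → Fin n) (hφ : ∀ i, #{l | φ l = i} = c) (x : Fin n → X) :
    empDist (x ∘ φ) = empDist x := by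
  have hk : k = n * c := by
    simpa [hφ] using card_eq_sum_card_fiberwise (f := φ) (s := univ) (t := univ) (by simp)
  have hsum : ∑ l, Measure.dirac (x (φ l)) = c • ∑ i, Measure.dirac (x i) := by
    rw [← sum_fiberwise univ φ, smul_sum]
    refine sum_congr rfl fun i _ => ?_
    rw [sum_congr rfl fun l hl => by rw [(mem_filter.1 hl).2], sum_const, hφ]
  rw [empDist, empDist, Function.comp_def, hsum, hk, ← Nat.cast_smul_eq_nsmul ℝ≥0∞, smul_smul,
    Nat.cast_mul, ENNReal.mul_inv (by simp) (by simp), mul_assoc,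
    ENNReal.inv_mul_cancel (by simpa) (by simp), mul_one]

theorem IsCoupling.apply_le_apply_upperClosure {Z : Type*} [MeasurableSpace Z] [Preorder Z]
    {r : Measure (Z × Z)} {p q : Measure Z} (hr : IsCoupling r p q)
    (hsupp : r {z | z.1 ≤ z.2}ᶜ = 0) {s : Set Z} (hs : MeasurableSet s) :
    p s ≤ q (upperClosure s) := by
  have hsub : Prod.fst ⁻¹' s ⊆ Prod.snd ⁻¹' (upperClosure s : Set Z) ∪ {z | z.1 ≤ z.2}ᶜ := by
    rintro ⟨a, b⟩ ha
    by_cases hab : a ≤ b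
    · exact Or.inl (mem_upperClosure.2 ⟨a, ha, hab⟩)
    · exact Or.inr hab
  calc p s = r (Prod.fst ⁻¹' s) := by rw [← hr.1, Measure.map_apply measurable_fst hs]
    _ ≤ r (Prod.snd ⁻¹' (upperClosure s : Set Z)) + r {z | z.1 ≤ z.2}ᶜ :=
      (measure_mono hsub).trans (measure_union_le _ _)
    _ ≤ q (upperClosure s) := by
      rw [hsupp, add_zero, ← hr.2]
      exact Measure.le_map_apply measurable_snd.aemeasurable _

open Classical in
theorem exists_prod_equiv_swap_of_card_mul_le {α β : Type*} [Fintype α] [Fintype β]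
    (R : α → β → Prop)
    (hR : ∀ A : Finset α, Fintype.card β * #A ≤ Fintype.card α * #{b | ∃ a ∈ A, R a b}) :
    ∃ e : α × β ≃ β × α, ∀ p, R p.1 (e p).1 := by
  set t : α × β → Finset (β × α) := fun p => {q | R p.1 q.1}
  have hall : ∀ s : Finset (α × β), #s ≤ #(s.biUnion t) := by
    intro s
    have hbiUnion : s.biUnion t =
        ({b | ∃ a ∈ s.image Prod.fst, R a b} : Finset β) ×ˢ (univ : Finset α) := by
      ext q
      simp [t]
    calc #s ≤ #(s.image Prod.fst ×ˢ (univ : Finset β)) :=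
          card_le_card fun p hp => mem_product.2 ⟨mem_image_of_mem _ hp, mem_univ _⟩
      _ ≤ #(s.biUnion t) := by
        rw [hbiUnion, card_product, card_product, card_univ, card_univ, mul_comm,
          mul_comm _ (Fintype.card α)]
        exact hR _
  obtain ⟨f, hf, hft⟩ := (all_card_le_biUnion_card_iff_exists_injective t).1 hall
  have hbij : Function.Bijective f :=
    (Fintype.bijective_iff_injective_and_card f).2 ⟨hf, by simp [mul_comm]⟩
  exact ⟨Equiv.ofBijective f hbij, fun p => by simpa [t] using hft p⟩

theorem card_filter_fst_equiv_eq {γ α β : Type*} [Fintype γ] [Fintype α] [Fintype β]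
    [DecidableEq α] (e : γ ≃ α × β) (a : α) : #{l | (e l).1 = a} = Fintype.card β := by
  rw [← Fintype.card_subtype, Fintype.card_congr ((e.subtypeEquiv (q := fun p => p.1 = a)
    fun _ => Iff.rfl).trans (Equiv.prodSubtypeFstEquivSubtypeProd (p := (· = a))))]
  simp

open Classical in
theorem card_mul_le_card_mul_of_isCoupling_empDist {X : Type*} [MeasurableSpace X]
    [MeasurableSingletonClass X] [Preorder X] {n m : ℕ} (hn : n ≠ 0) (hm : m ≠ 0)
    {x : Fin n → X} {y : Fin m → X} {r : Measure (X × X)}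
    (hr : IsCoupling r (empDist x) (empDist y)) (hsupp : r {z | z.1 ≤ z.2}ᶜ = 0)
    (A : Finset (Fin n)) : m * #A ≤ n * #{j | ∃ i ∈ A, x i ≤ y j} := by
  have hmeasure := hr.apply_le_apply_upperClosure hsupp (A.finite_toSet.image x).measurableSet
  have hupper : #{j | y j ∈ (upperClosure (x '' A) : Set X)} = #{j | ∃ i ∈ A, x i ≤ y j} := by
    congr 1
    ext j
    simp
  rw [empDist_apply, empDist_apply, hupper] at hmeasure
  have hA : #A ≤ #{i | x i ∈ x '' A} :=
    card_le_card fun i hi => mem_filter.2 ⟨mem_univ _, i, hi, rfl⟩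
  have hn' : (n : ℝ≥0∞) ≠ 0 := by exact_mod_cast hn
  have hm' : (m : ℝ≥0∞) ≠ 0 := by exact_mod_cast hm
  suffices (m * #A : ℝ≥0∞) ≤ n * #{j | ∃ i ∈ A, x i ≤ y j} by exact_mod_cast this
  calc (m * #A : ℝ≥0∞) ≤ m * n * ((n : ℝ≥0∞)⁻¹ * #{i | x i ∈ x '' A}) := by
        rw [mul_assoc (m : ℝ≥0∞), ← mul_assoc (n : ℝ≥0∞), ENNReal.mul_inv_cancel hn' (by simp),
          one_mul]
        gcongr
    _ ≤ m * n * ((m : ℝ≥0∞)⁻¹ * #{j | ∃ i ∈ A, x i ≤ y j}) := by gcongr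
    _ = n * #{j | ∃ i ∈ A, x i ≤ y j} := by
        rw [mul_comm (m : ℝ≥0∞), mul_assoc, ← mul_assoc (m : ℝ≥0∞),
          ENNReal.mul_inv_cancel hm' (by simp), one_mul]

theorem splitting_lemma_general
    {X : Type*} [MetricSpace X] [PartialOrder X] [MeasurableSpace X] [BorelSpace X]
    {n m : ℕ} (hn : 0 < n) (hm : 0 < m) (x : Fin n → X) (y : Fin m → X) :
    (∃ r : Measure (X × X), IsCoupling r (empDist x) (empDist y) ∧
        r {z : X × X | z.1 ≤ z.2}ᶜ = 0) ↔
      ∃ (k : ℕ) (_ : 0 < k) (φ : Fin k → Fin n) (ψ : Fin k → Fin m),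
        (∀ i i' : Fin n,
          (Finset.univ.filter fun l => φ l = i).card =
            (Finset.univ.filter fun l => φ l = i').card) ∧
        (∀ j j' : Fin m,
          (Finset.univ.filter fun l => ψ l = j).card =
            (Finset.univ.filter fun l => ψ l = j').card) ∧
        (∀ l : Fin k, x (φ l) ≤ y (ψ l)) := by
  classical
  constructor
  · rintro ⟨r, hr, hsupp⟩
    obtain ⟨e, he⟩ := exists_prod_equiv_swap_of_card_mul_le (fun i j => x i ≤ y j) fun A => by
      rw [Fintype.card_fin, Fintype.card_fin]
      -- the two sides differ only in their `Decidable` instances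
      convert card_mul_le_card_mul_of_isCoupling_empDist hn.ne' hm.ne' hr hsupp A using 5
    let g : Fin (n * m) ≃ Fin n × Fin m := finProdFinEquiv.symm
    refine ⟨n * m, Nat.mul_pos hn hm, fun l => (g l).1, fun l => (g.trans e l).1,
      fun i i' => ?_, fun j j' => ?_, fun l => he (g l)⟩
    · rw [card_filter_fst_equiv_eq, card_filter_fst_equiv_eq]
    · rw [card_filter_fst_equiv_eq, card_filter_fst_equiv_eq]
  · rintro ⟨k, hk, φ, ψ, hφ, hψ, hle⟩
    have hfiber {N : ℕ} (χ : Fin k → Fin N) (l : Fin k) : #{l' | χ l' = χ l} ≠ 0 :=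
      (card_pos.2 ⟨l, by simp⟩).ne'
    refine ⟨empDist fun l => (x (φ l), y (ψ l)), ⟨?_, ?_⟩, ?_⟩
    · rw [map_empDist _ measurable_fst]
      exact empDist_comp_of_card_fiber_eq (hfiber φ ⟨0, hk⟩) φ (fun i => hφ i _) x
    · rw [map_empDist _ measurable_snd]
      exact empDist_comp_of_card_fiber_eq (hfiber ψ ⟨0, hk⟩) ψ (fun j => hψ j _) y
    · simp [empDist_apply, hle]

/-- Splitting Lemma: on an ordered metric space (closed partial order), the empirical
distribution of `x : Fin n → X` is below that of `y : Fin m → X` in the stochastic order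
iff there are `k ≥ 1` and maps `φ : Fin k → Fin n`, `ψ : Fin k → Fin m` with all fibers of
equal cardinality such that `x (φ l) ≤ y (ψ l)` for every `l`. -/
theorem splitting_lemma
    {X : Type*} [MetricSpace X] [PartialOrder X] [MeasurableSpace X] [BorelSpace X]
    (hcl : IsClosed {z : X × X | z.1 ≤ z.2})
    {n m : ℕ} (hn : 0 < n) (hm : 0 < m) (x : Fin n → X) (y : Fin m → X) :
    (∃ r : Measure (X × X), IsCoupling r (empDist x) (empDist y) ∧
        r {z : X × X | z.1 ≤ z.2}ᶜ = 0) ↔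
      ∃ (k : ℕ) (_ : 0 < k) (φ : Fin k → Fin n) (ψ : Fin k → Fin m),
        (∀ i i' : Fin n,
          (Finset.univ.filter fun l => φ l = i).card =
            (Finset.univ.filter fun l => φ l = i').card) ∧
        (∀ j j' : Fin m,
          (Finset.univ.filter fun l => ψ l = j).card =
            (Finset.univ.filter fun l => ψ l = j').card) ∧
        (∀ l : Fin k, x (φ l) ≤ y (ψ l)) :=
  splitting_lemma_general hn hm x y
end

section
/- Monotonicity of the barycenter map is equivalent to binary compatibility: Let E be a real Banach space, A ⊆ E a nonempty closed convex subset, and ≤ a partial order on A whose graph is closed in A × A. Then the following are equivalent: (a) for all a, b, c ∈ A and λ ∈ [0,1], a ≤ b implies λ·a + (1−λ)·c ≤ λ·b + (1−λ)·c; (b) for all Radon Borel probability measures p and q on E that are supported in A and satisfy ∫ ‖x‖ dp < ∞ and ∫ ‖x‖ dq < ∞, if there exists a coupling of p and q supported on {(a,b) ∈ A × A : a ≤ b}, then the barycenters (Bochner integrals) satisfy ∫ x dp ≤ ∫ x dq (both barycenters lie in A since A is closed and convex). -/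
open MeasureTheory
open scoped ENNReal

/-- Any function is integrable with respect to a Dirac measure. -/
lemma integrable_dirac_aux {α E : Type*} [MeasurableSpace α] [MeasurableSingletonClass α]
    [NormedAddCommGroup E] (f : α → E) (a : α) : Integrable f (Measure.dirac a) := by
  have h : f =ᵐ[Measure.dirac a] fun _ => f a := by
    rw [Filter.EventuallyEq, ae_iff]
    have : {x | ¬ f x = f a} ⊆ {a}ᶜ := by
      intro x hx
      simp only [Set.mem_compl_iff, Set.mem_singleton_iff]
      rintro rfl; exact hx rfl
    refine measure_mono_null this ?_
    simp [Measure.dirac_apply, Set.indicator_apply]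
  exact (integrable_const (f a)).congr h.symm

/-- A finite nonnegative combination of two Dirac measures is inner regular. -/
lemma innerRegular_combo_dirac {α : Type*} [MeasurableSpace α] [TopologicalSpace α]
    [MeasurableSingletonClass α] (x y : α) (s t : ℝ≥0∞) :
    (s • Measure.dirac x + t • Measure.dirac y).InnerRegular := by
  constructor
  intro U hU r hr
  refine ⟨U ∩ {x, y}, Set.inter_subset_left, ?_, ?_⟩
  · exact (Set.toFinite (U ∩ {x, y})).isCompact
  · have hxy : (s • Measure.dirac x + t • Measure.dirac y) (U ∩ {x, y}) =
        (s • Measure.dirac x + t • Measure.dirac y) U := by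
      have h1 : Measure.dirac x (U ∩ {x, y}) = Measure.dirac x U := by
        by_cases hx : x ∈ U <;>
          simp [Measure.dirac_apply, Set.indicator_apply, hx]
      have h2 : Measure.dirac y (U ∩ {x, y}) = Measure.dirac y U := by
        by_cases hy : y ∈ U <;>
          simp [Measure.dirac_apply, Set.indicator_apply, hy]
      simp [Measure.add_apply, Measure.smul_apply, h1, h2]
    rwa [hxy]

/-- An inner regular probability measure on a metrizable space is supported on a
separable set. -/
lemma exists_separable_ae {E : Type*} [NormedAddCommGroup E]
    [MeasurableSpace E] [BorelSpace E]
    (p : Measure E) [IsProbabilityMeasure p] (hreg : p.InnerRegular) :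
    ∃ T : Set E, TopologicalSpace.IsSeparable T ∧ ∀ᵐ x ∂p, x ∈ T := by
  have hK : ∀ n : ℕ, ∃ K : Set E, IsCompact K ∧ 1 - ((n : ℝ≥0∞) + 1)⁻¹ < p K := by
    intro n
    have hlt : (1 : ℝ≥0∞) - ((n : ℝ≥0∞) + 1)⁻¹ < p Set.univ := by
      rw [measure_univ]
      exact ENNReal.sub_lt_self ENNReal.one_ne_top one_ne_zero
        (ENNReal.inv_ne_zero.2 (by simp))
    obtain ⟨K, -, hKc, hKlt⟩ := hreg.innerRegular MeasurableSet.univ _ hlt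
    exact ⟨K, hKc, hKlt⟩
  choose K hKc hKlt using hK
  refine ⟨⋃ n, K n, TopologicalSpace.IsSeparable.iUnion (fun n => (hKc n).isSeparable), ?_⟩
  rw [Filter.eventually_iff, mem_ae_iff]
  simp only [Set.setOf_mem_eq]
  have hle : ∀ n : ℕ, p (⋃ m, K m)ᶜ ≤ ((n : ℝ≥0∞) + 1)⁻¹ := by
    intro n
    have h1 : p (⋃ m, K m)ᶜ ≤ p (K n)ᶜ :=
      measure_mono (Set.compl_subset_compl.2 (Set.subset_iUnion K n))
    have h2 : p (K n)ᶜ = 1 - p (K n) := by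
      rw [measure_compl (hKc n).isClosed.measurableSet (measure_ne_top p _), measure_univ]
    have h3 : (1 : ℝ≥0∞) - p (K n) ≤ ((n : ℝ≥0∞) + 1)⁻¹ := by
      rw [tsub_le_iff_left]
      have hε : ((n : ℝ≥0∞) + 1)⁻¹ ≤ 1 := ENNReal.inv_le_one.2 (le_add_self)
      calc (1 : ℝ≥0∞) = (1 - ((n : ℝ≥0∞) + 1)⁻¹) + ((n : ℝ≥0∞) + 1)⁻¹ :=
            (tsub_add_cancel_of_le hε).symm
        _ ≤ p (K n) + ((n : ℝ≥0∞) + 1)⁻¹ := add_le_add (hKlt n).le le_rfl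
    calc p (⋃ m, K m)ᶜ ≤ p (K n)ᶜ := h1
      _ = 1 - p (K n) := h2
      _ ≤ ((n : ℝ≥0∞) + 1)⁻¹ := h3
  by_contra h
  obtain ⟨n, hn⟩ := ENNReal.exists_inv_nat_lt h
  have : p (⋃ m, K m)ᶜ ≤ (n : ℝ≥0∞)⁻¹ := by
    refine (hle n).trans ?_
    exact ENNReal.inv_le_inv.2 le_self_add
  exact absurd (hn.trans_le this) (lt_irrefl _)

/-- For a nonempty closed convex subset `A` of a Banach space, equipped with a partial order
`le` (on `A`) with closed graph, compatibility of the order with binary convex combinations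
is equivalent to monotonicity of the barycenter map with respect to the stochastic order. -/
theorem barycenter_monotone_iff_binary_compat
    {E : Type*} [NormedAddCommGroup E] [NormedSpace ℝ E] [CompleteSpace E]
    [MeasurableSpace E] [BorelSpace E]
    (A : Set E) (hAne : A.Nonempty) (hAcl : IsClosed A) (hAconv : Convex ℝ A)
    (le : E → E → Prop)
    (hrefl : ∀ a ∈ A, le a a)
    (htrans : ∀ a ∈ A, ∀ b ∈ A, ∀ c ∈ A, le a b → le b c → le a c)
    (hantisymm : ∀ a ∈ A, ∀ b ∈ A, le a b → le b a → a = b)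
    (hgraph : IsClosed {z : E × E | z.1 ∈ A ∧ z.2 ∈ A ∧ le z.1 z.2}) :
    (∀ a ∈ A, ∀ b ∈ A, ∀ c ∈ A, ∀ lam : ℝ, 0 ≤ lam → lam ≤ 1 → le a b →
        le (lam • a + (1 - lam) • c) (lam • b + (1 - lam) • c)) ↔
      (∀ p q : Measure E, IsProbabilityMeasure p → IsProbabilityMeasure q →
        p.InnerRegular → q.InnerRegular →
        p Aᶜ = 0 → q Aᶜ = 0 →
        Integrable (fun x => ‖x‖) p → Integrable (fun x => ‖x‖) q →
        (∃ r : Measure (E × E), IsCoupling r p q ∧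
          r {z : E × E | z.1 ∈ A ∧ z.2 ∈ A ∧ le z.1 z.2}ᶜ = 0) →
        le (∫ x, x ∂p) (∫ x, x ∂q)) := by
  set S : Set (E × E) := {z : E × E | z.1 ∈ A ∧ z.2 ∈ A ∧ le z.1 z.2} with hS
  constructor
  · -- binary compatibility → barycenter monotone
    intro compat p q hp hq hpreg hqreg hpA hqA hpint hqint ⟨r, ⟨hr1, hr2⟩, hrS⟩
    -- S is convex
    have hSconv : Convex ℝ S := by
      rintro x ⟨hx1, hx2, hx12⟩ y ⟨hy1, hy2, hy12⟩ s t hs ht hst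
      have hts : t = 1 - s := by linarith
      have hm1 : s • x.1 + t • y.1 ∈ A := hAconv hx1 hy1 hs ht hst
      have hm2 : s • x.2 + t • y.1 ∈ A := hAconv hx2 hy1 hs ht hst
      have hm3 : s • x.2 + t • y.2 ∈ A := hAconv hx2 hy2 hs ht hst
      have step1 : le (s • x.1 + t • y.1) (s • x.2 + t • y.1) := by
        rw [hts]
        exact compat x.1 hx1 x.2 hx2 y.1 hy1 s hs (by linarith) hx12
      have step2 : le (s • x.2 + t • y.1) (s • x.2 + t • y.2) := by
        have := compat y.1 hy1 y.2 hy2 x.2 hx2 t ht (by linarith) hy12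
        have h1t : (1 : ℝ) - t = s := by linarith
        rw [h1t] at this
        rwa [add_comm (s • x.2) (t • y.1), add_comm (s • x.2) (t • y.2)]
      refine ⟨hm1, hm3, ?_⟩
      exact htrans _ hm1 _ hm2 _ hm3 step1 step2
    -- r is a probability measure
    haveI : IsProbabilityMeasure r := by
      constructor
      have h := congrArg (fun μ : Measure E => μ Set.univ) hr1
      rw [Measure.map_apply measurable_fst MeasurableSet.univ, Set.preimage_univ] at h
      rw [h, measure_univ]
    -- identity is a.e. strongly measurable w.r.t. p and q
    have haesm : ∀ (μ : Measure E), IsProbabilityMeasure μ → μ.InnerRegular →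
        AEStronglyMeasurable (fun x : E => x) μ := by
      intro μ hμ hμreg
      obtain ⟨T, hTsep, hTae⟩ := exists_separable_ae μ hμreg
      exact aestronglyMeasurable_iff_aemeasurable_separable.2
        ⟨aemeasurable_id, T, hTsep, hTae⟩
    have hpid : Integrable (fun x : E => x) p :=
      (integrable_norm_iff (haesm p hp hpreg)).1 hpint
    have hqid : Integrable (fun x : E => x) q :=
      (integrable_norm_iff (haesm q hq hqreg)).1 hqint
    -- components are integrable w.r.t. r
    have hrfst : Integrable (fun z : E × E => z.1) r := by
      have := (integrable_map_measure (f := Prod.fst) (g := fun x : E => x)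
        (by rw [hr1]; exact haesm p hp hpreg) measurable_fst.aemeasurable).1
        (by rw [hr1]; exact hpid)
      exact this
    have hrsnd : Integrable (fun z : E × E => z.2) r := by
      have := (integrable_map_measure (f := Prod.snd) (g := fun x : E => x)
        (by rw [hr2]; exact haesm q hq hqreg) measurable_snd.aemeasurable).1
        (by rw [hr2]; exact hqid)
      exact this
    have hrid : Integrable (fun z : E × E => z) r := by
      have := hrfst.prodMk hrsnd
      simpa using this
    -- barycenter of r belongs to S
    have haeS : ∀ᵐ z ∂r, z ∈ S := by
      rw [Filter.eventually_iff, mem_ae_iff]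
      exact hrS
    have hmem : (∫ z, z ∂r) ∈ S := hSconv.integral_mem hgraph haeS hrid
    -- compute the components of the barycenter of r
    have hfst : (∫ z, z ∂r).1 = ∫ x, x ∂p := by
      have hL := ContinuousLinearMap.integral_comp_comm (ContinuousLinearMap.fst ℝ E E) hrid
      have h2 : ∫ x, x ∂p = ∫ z, z.1 ∂r := by
        rw [← hr1]
        exact integral_map measurable_fst.aemeasurable
          (by rw [hr1]; exact haesm p hp hpreg)
      simp only [ContinuousLinearMap.coe_fst'] at hL
      rw [h2, ← hL]
    have hsnd : (∫ z, z ∂r).2 = ∫ x, x ∂q := by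
      have hL := ContinuousLinearMap.integral_comp_comm (ContinuousLinearMap.snd ℝ E E) hrid
      have h2 : ∫ x, x ∂q = ∫ z, z.2 ∂r := by
        rw [← hr2]
        exact integral_map measurable_snd.aemeasurable
          (by rw [hr2]; exact haesm q hq hqreg)
      simp only [ContinuousLinearMap.coe_snd'] at hL
      rw [h2, ← hL]
    obtain ⟨-, -, hle⟩ := hmem
    rwa [hfst, hsnd] at hle
  · -- barycenter monotone → binary compatibility
    intro hbar a ha b hb c hc lam h0 h1 hab
    set p : Measure E := ENNReal.ofReal lam • Measure.dirac a +
      ENNReal.ofReal (1 - lam) • Measure.dirac c with hp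
    set q : Measure E := ENNReal.ofReal lam • Measure.dirac b +
      ENNReal.ofReal (1 - lam) • Measure.dirac c with hq
    have hsum : ENNReal.ofReal lam + ENNReal.ofReal (1 - lam) = 1 := by
      rw [← ENNReal.ofReal_add h0 (by linarith)]
      norm_num
    have hpprob : IsProbabilityMeasure p := by
      constructor
      simp [hp, Measure.add_apply, Measure.smul_apply, hsum]
    have hqprob : IsProbabilityMeasure q := by
      constructor
      simp [hq, Measure.add_apply, Measure.smul_apply, hsum]
    have hpA : p Aᶜ = 0 := by
      simp [hp, Measure.add_apply, Measure.smul_apply, Measure.dirac_apply,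
        Set.indicator_apply, ha, hc]
    have hqA : q Aᶜ = 0 := by
      simp [hq, Measure.add_apply, Measure.smul_apply, Measure.dirac_apply,
        Set.indicator_apply, hb, hc]
    have hint : ∀ x y : E, Integrable (fun z => ‖z‖)
        (ENNReal.ofReal lam • Measure.dirac x + ENNReal.ofReal (1 - lam) • Measure.dirac y) := by
      intro x y
      exact ((integrable_dirac_aux _ x).smul_measure ENNReal.ofReal_ne_top).add_measure
        ((integrable_dirac_aux _ y).smul_measure ENNReal.ofReal_ne_top)
    -- the coupling
    set r : Measure (E × E) := ENNReal.ofReal lam • Measure.dirac (a, b) +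
      ENNReal.ofReal (1 - lam) • Measure.dirac (c, c) with hr
    have hcoup : IsCoupling r p q := by
      constructor
      · rw [hr, Measure.map_add _ _ measurable_fst, Measure.map_smul, Measure.map_smul,
          Measure.map_dirac' measurable_fst, Measure.map_dirac' measurable_fst]
      · rw [hr, Measure.map_add _ _ measurable_snd, Measure.map_smul, Measure.map_smul,
          Measure.map_dirac' measurable_snd, Measure.map_dirac' measurable_snd]
    have hrS : r Sᶜ = 0 := by
      have hab' : (a, b) ∈ S := ⟨ha, hb, hab⟩
      have hcc' : (c, c) ∈ S := ⟨hc, hc, hrefl c hc⟩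
      simp [hr, Measure.add_apply, Measure.smul_apply, Measure.dirac_apply,
        Set.indicator_apply, hab', hcc']
    have key := hbar p q hpprob hqprob
      (innerRegular_combo_dirac a c _ _) (innerRegular_combo_dirac b c _ _)
      hpA hqA (hint a c) (hint b c) ⟨r, hcoup, hrS⟩
    -- compute the barycenters
    have hbary : ∀ x y : E, (∫ z, z ∂(ENNReal.ofReal lam • Measure.dirac x +
        ENNReal.ofReal (1 - lam) • Measure.dirac y)) = lam • x + (1 - lam) • y := by
      intro x y
      rw [integral_add_measure
        ((integrable_dirac_aux _ x).smul_measure ENNReal.ofReal_ne_top)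
        ((integrable_dirac_aux _ y).smul_measure ENNReal.ofReal_ne_top),
        integral_smul_measure, integral_smul_measure, integral_dirac, integral_dirac,
        ENNReal.toReal_ofReal h0, ENNReal.toReal_ofReal (by linarith : (0:ℝ) ≤ 1 - lam)]
    rw [hp] at key
    rw [hq] at key
    rwa [hbary a c, hbary b c] at key
end

section
/- Every ordered Banach space is L-ordered: Let E be an ordered Banach space and a, b ∈ E. Then a ≤ b if and only if f(a) ≤ f(b) for every monotone 1-Lipschitz function f : E → ℝ. -/
/-- Every ordered Banach space (order given by a closed, convex, pointed positive cone `C`)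
is L-ordered: `a ≤ b` (i.e. `b − a ∈ C`) iff `f a ≤ f b` for every 1-Lipschitz function
`f : E → ℝ` that is monotone with respect to the cone order. -/
theorem orderedBanach_is_L_ordered
    {E : Type*} [NormedAddCommGroup E] [NormedSpace ℝ E] [CompleteSpace E]
    (C : Set E) (hCcl : IsClosed C) (hC0 : (0 : E) ∈ C)
    (hCadd : ∀ a ∈ C, ∀ b ∈ C, a + b ∈ C)
    (hCsmul : ∀ t : ℝ, 0 ≤ t → ∀ c ∈ C, t • c ∈ C)
    (hCpointed : ∀ c ∈ C, -c ∈ C → c = 0)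
    (a b : E) :
    b - a ∈ C ↔
      ∀ f : E → ℝ, (∀ x y : E, y - x ∈ C → f x ≤ f y) → LipschitzWith 1 f → f a ≤ f b := by
  constructor
  · intro h f hf _
    exact hf a b h
  · intro h
    by_contra hb
    set S : Set E := (a + ·) '' C with hS
    have hScl : IsClosed S := (Homeomorph.addLeft a).isClosedMap _ hCcl
    have hSne : S.Nonempty := ⟨a, 0, hC0, by simp⟩
    have haS : a ∈ S := ⟨0, hC0, by simp⟩
    have hbS : b ∉ S := by
      rintro ⟨c, hc, rfl⟩
      exact hb (by simpa using hc)
    set f : E → ℝ := fun x => -Metric.infDist x S with hf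
    have hmono : ∀ x y : E, y - x ∈ C → f x ≤ f y := by
      intro x y hxy
      have : Metric.infDist y S ≤ Metric.infDist x S := by
        have key : Metric.infDist y ((· + (y - x)) '' S) = Metric.infDist x S := by
          have : Metric.infDist (x + (y - x)) ((· + (y - x)) '' S) = Metric.infDist x S :=
            Metric.infDist_image (isometry_add_right (y - x))
          simpa using this
        rw [← key]
        apply Metric.infDist_le_infDist_of_subset _ (hSne.image _)
        rintro _ ⟨_, ⟨c, hc, rfl⟩, rfl⟩
        exact ⟨c + (y - x), hCadd c hc _ hxy, (add_assoc a c (y - x)).symm⟩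
      simpa [hf] using neg_le_neg this
    have hlip : LipschitzWith 1 f :=
      (Metric.lipschitz_infDist_pt S).neg
    have := h f hmono hlip
    have hfa : f a = 0 := by simp [hf, Metric.infDist_zero_of_mem haS]
    have hfb : f b < 0 := by
      have := (hScl.notMem_iff_infDist_pos hSne).1 hbS
      simpa [hf] using this
    linarith
end

section
/- Metric lifting from dense subsets: Let X and Y be metric spaces with X complete, and let f : X → Y be 1-Lipschitz. Let D ⊆ X and E ⊆ Y be dense subsets. Suppose that for every x ∈ D, y' ∈ E, and C > 0 with d(f(x), y') < C, there exists x' ∈ D with f(x') = y' and d(x, x') < C. Then f has the metric lifting property: for every x ∈ X, y' ∈ Y, and C > 0 with d(f(x), y') < C, there exists x' ∈ X with f(x') = y' and d(x, x') < C. -/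
/-- Metric lifting from dense subsets: if a 1-Lipschitz map `f : X → Y` from a complete
metric space admits metric liftings between dense subsets `D ⊆ X` and `E ⊆ Y`, then `f`
has the metric lifting property globally. -/
theorem metric_lifting_of_dense
    {X Y : Type*} [MetricSpace X] [MetricSpace Y] [CompleteSpace X]
    (f : X → Y) (hf : LipschitzWith 1 f)
    (D : Set X) (E : Set Y) (hD : Dense D) (hE : Dense E)
    (h : ∀ x ∈ D, ∀ y' ∈ E, ∀ C : ℝ, 0 < C → dist (f x) y' < C →
      ∃ x' ∈ D, f x' = y' ∧ dist x x' < C) :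
    ∀ (x : X) (y' : Y) (C : ℝ), 0 < C → dist (f x) y' < C →
      ∃ x' : X, f x' = y' ∧ dist x x' < C := by
  intro x y' C hC hlt
  set δ : ℝ := C - dist (f x) y' with hδdef
  have hδ : 0 < δ := by simp [hδdef]; linarith
  set ε : ℝ := δ / 9 with hεdef
  have hε : 0 < ε := by positivity
  -- choose x₀ ∈ D near x
  obtain ⟨x₀, hx₀D, hx₀⟩ := hD.exists_dist_lt x hε
  -- choose yₙ ∈ E with dist (y n) y' < ε * (1/2)^n
  have hy : ∀ n : ℕ, ∃ y ∈ E, dist y' y < ε * (1/2) ^ n := fun n =>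
    hE.exists_dist_lt y' (by positivity)
  choose y hyE hyd using hy
  -- initial lift
  have h0 : dist (f x₀) (y 0) < C - δ + 3 * ε := by
    have h1 : dist (f x₀) (f x) ≤ dist x₀ x := by
      simpa using hf.dist_le_mul x₀ x
    have := hyd 0
    have h2 := dist_triangle4 (f x₀) (f x) y' (y 0)
    rw [dist_comm x₀ x] at h1
    simp only [pow_zero, mul_one] at this
    rw [hδdef] at *
    linarith [dist_comm y' (y 0) ▸ this]
  obtain ⟨z₀, hz₀D, hz₀f, hz₀d⟩ := h x₀ hx₀D (y 0) (hyE 0) (C - δ + 3 * ε)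
    (by nlinarith [dist_nonneg (x := f x) (y := y')]) h0
  -- recursive construction of lifts
  have step : ∀ n : ℕ, ∀ z : X, z ∈ D → f z = y n →
      ∃ z' ∈ D, f z' = y (n+1) ∧ dist z z' < 2 * ε * (1/2) ^ n := by
    intro n z hzD hzf
    have hd : dist (f z) (y (n+1)) < 2 * ε * (1/2) ^ n := by
      rw [hzf]
      have h1 := hyd n
      have h2 := hyd (n+1)
      have h3 := dist_triangle (y n) y' (y (n+1))
      rw [dist_comm (y n) y'] at h3
      have : (1/2 : ℝ) ^ (n+1) ≤ (1/2) ^ n := by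
        apply pow_le_pow_of_le_one <;> norm_num
      nlinarith
    exact h z hzD (y (n+1)) (hyE (n+1)) _ (by positivity) hd
  choose! g hgD hgf hgd using step
  -- the sequence
  let z : ℕ → X := fun n => Nat.rec z₀ (fun n z => g n z) n
  have hzD : ∀ n, z n ∈ D ∧ f (z n) = y n := by
    intro n
    induction n with
    | zero => exact ⟨hz₀D, hz₀f⟩
    | succ n ih => exact ⟨hgD n (z n) ih.1 ih.2, hgf n (z n) ih.1 ih.2⟩
  have hzd : ∀ n, dist (z n) (z (n+1)) ≤ 2 * ε * (1/2) ^ n := fun n =>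
    le_of_lt (hgd n (z n) (hzD n).1 (hzD n).2)
  have hhalf : (1/2 : ℝ) < 1 := by norm_num
  have hcauchy : CauchySeq z := cauchySeq_of_le_geometric (1/2) (2*ε) hhalf hzd
  obtain ⟨x', hx'⟩ := cauchySeq_tendsto_of_complete hcauchy
  -- f x' = y'
  have hyy : Filter.Tendsto y Filter.atTop (nhds y') := by
    apply tendsto_iff_dist_tendsto_zero.2
    apply squeeze_zero (fun n => dist_nonneg) (fun n => le_of_lt (dist_comm y' (y n) ▸ hyd n))
    simpa using (tendsto_pow_atTop_nhds_zero_of_lt_one (by norm_num) hhalf).const_mul ε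
  have hfx' : f x' = y' := by
    have h1 : Filter.Tendsto (fun n => f (z n)) Filter.atTop (nhds (f x')) :=
      (hf.continuous.tendsto x').comp hx'
    have h2 : (fun n => f (z n)) = y := funext fun n => (hzD n).2
    rw [h2] at h1
    exact tendsto_nhds_unique h1 hyy
  refine ⟨x', hfx', ?_⟩
  have hz0 : dist (z 0) x' ≤ 2 * ε / (1 - 1/2) :=
    dist_le_of_le_geometric_of_tendsto₀ (1/2) (2*ε) hhalf hzd hx'
  have hz0' : dist z₀ x' ≤ 4 * ε := by
    have : (2 * ε / (1 - 1/2 : ℝ)) = 4 * ε := by ring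
    rw [this] at hz0; exact hz0
  calc dist x x' ≤ dist x x₀ + dist x₀ z₀ + dist z₀ x' := dist_triangle4 x x₀ z₀ x'
    _ < ε + (C - δ + 3*ε) + 4*ε := by linarith
    _ < C := by rw [hεdef]; linarith
end

section
/- Metric lifting plus compact fibers implies properness and submetry: Let X be a complete metric space, Y a metric space, and f : X → Y a 1-Lipschitz map with the metric lifting property such that the preimage f⁻¹({y}) of every point y ∈ Y is compact. Then: (a) f is proper, i.e. the preimage f⁻¹(K) of every compact set K ⊆ Y is compact; and (b) f is a submetry in the following sense: for every x ∈ X and y' ∈ Y there exists x' ∈ X with f(x') = y' and d(x, x') = d(f(x), y'). -/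
/-- A 1-Lipschitz map with the metric lifting property and compact point-preimages is
proper (preimages of compact sets are compact) and a submetry (distances to points can be
realized exactly by lifts). -/
theorem proper_and_submetry_of_metric_lifting
    {X Y : Type*} [MetricSpace X] [MetricSpace Y] [CompleteSpace X]
    (f : X → Y) (hf : LipschitzWith 1 f)
    (hlift : ∀ (C : ℝ), 0 < C → ∀ (x : X) (y' : Y), dist (f x) y' < C →
      ∃ x' : X, f x' = y' ∧ dist x x' < C)
    (hfib : ∀ y : Y, IsCompact (f ⁻¹' {y})) :
    (∀ K : Set Y, IsCompact K → IsCompact (f ⁻¹' K)) ∧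
    (∀ (x : X) (y' : Y), ∃ x' : X, f x' = y' ∧ dist x x' = dist (f x) y') := by
  constructor
  · intro K hK
    apply TotallyBounded.isCompact_of_isClosed
    · rw [Metric.totallyBounded_iff]
      intro ε hε
      obtain ⟨t, htfin, htK⟩ :=
        Metric.totallyBounded_iff.mp hK.totallyBounded (ε / 3) (by positivity)
      choose s hsfin hscov using fun y : Y =>
        Metric.totallyBounded_iff.mp (hfib y).totallyBounded (ε / 3) (by positivity)
      refine ⟨⋃ y ∈ t, s y, htfin.biUnion fun y _ => hsfin y, ?_⟩
      intro x hx
      obtain ⟨y, hyt, hxy⟩ : ∃ y ∈ t, dist (f x) y < ε / 3 := by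
        have := htK hx
        simpa [Metric.mem_ball] using this
      obtain ⟨x', hfx', hdx'⟩ := hlift (ε / 3) (by positivity) x y hxy
      have hx' : x' ∈ f ⁻¹' {y} := by simp [hfx']
      obtain ⟨c, hcs, hxc⟩ : ∃ c ∈ s y, dist x' c < ε / 3 := by
        have := hscov y hx'
        simpa [Metric.mem_ball] using this
      have hmem : c ∈ ⋃ y ∈ t, s y := Set.mem_biUnion hyt hcs
      refine Set.mem_biUnion hmem ?_
      have : dist x c ≤ dist x x' + dist x' c := dist_triangle _ _ _
      simp only [Metric.mem_ball]
      linarith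
    · exact hK.isClosed.preimage hf.continuous
  · intro x y'
    set D := dist (f x) y' with hD
    have hD0 : 0 ≤ D := dist_nonneg
    have hne : (f ⁻¹' {y'}).Nonempty := by
      obtain ⟨x', h1, _⟩ := hlift (D + 1) (by linarith) x y' (by rw [← hD]; linarith)
      exact ⟨x', by simp [h1]⟩
    obtain ⟨x0, hx0, hmin⟩ :=
      (hfib y').exists_isMinOn hne (((continuous_const.dist continuous_id : Continuous fun z => dist x z)).continuousOn)
    have hfx0 : f x0 = y' := hx0
    refine ⟨x0, hfx0, le_antisymm ?_ ?_⟩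
    · refine le_of_forall_pos_le_add fun ε hε => ?_
      obtain ⟨x', hfx', hdx'⟩ := hlift (D + ε) (by linarith) x y' (by rw [← hD]; linarith)
      have := hmin (by simp [hfx'] : x' ∈ f ⁻¹' {y'})
      rw [Set.mem_setOf_eq] at this
      linarith
    · have := hf.dist_le_mul x x0
      rw [hfx0] at this
      simpa using this
end

section
/- Monotonicity of product measures: Let X and Y be complete metric spaces, each with a partial order making it L-ordered, and equip X × Y with the ℓ¹ product metric d((x,y),(x',y')) = d(x,x') + d(y,y') and the product order. Let p, p' be Radon Borel probability measures on X and q, q' Radon Borel probability measures on Y, all with finite first moment. If there exist a coupling of p and p' supported on {(x,x') : x ≤ x'} and a coupling of q and q' supported on {(y,y') : y ≤ y'}, then there exists a coupling of the product measures p ⊗ q and p' ⊗ q' supported on {((x,y),(x',y')) : x ≤ x' and y ≤ y'}. -/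
/-!
Take monotone couplings `rX` of `p, p'` and `rY` of `q, q'`, and transport `rX ⊗ rY` along
`((x, x'), (y, y')) ↦ ((x, y), (x', y'))`. The marginals of a product measure are the products
of the marginals, so this is a coupling of `p ⊗ q` and `p' ⊗ q'`; and since `rX ⊗ rY`-almost
every point has both coordinates in their monotone sets, the image is supported on the product
order.
-/

open MeasureTheory

def MeasurableEquiv.prodProdProdComm (α β γ δ : Type*) [MeasurableSpace α] [MeasurableSpace β]
    [MeasurableSpace γ] [MeasurableSpace δ] : (α × β) × γ × δ ≃ᵐ (α × γ) × β × δ where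
  toEquiv := .prodProdProdComm α β γ δ
  measurable_toFun := by dsimp [Equiv.prodProdProdComm]; fun_prop
  measurable_invFun := by dsimp [Equiv.prodProdProdComm]; fun_prop

section

variable {X Y : Type*} [MeasurableSpace X] [MeasurableSpace Y]

theorem IsCoupling.isProbabilityMeasure {r : Measure (X × X)} {p p' : Measure X}
    [IsProbabilityMeasure p] (h : IsCoupling r p p') : IsProbabilityMeasure r := by
  rw [← Measure.isProbabilityMeasure_map_iff measurable_fst.aemeasurable, h.1]
  infer_instance

variable {rX : Measure (X × X)} {rY : Measure (Y × Y)}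

theorem IsCoupling.map_prodProdProdComm_prod [SFinite rX] [SFinite rY]
    {p p' : Measure X} {q q' : Measure Y} (hX : IsCoupling rX p p') (hY : IsCoupling rY q q') :
    IsCoupling ((rX.prod rY).map (MeasurableEquiv.prodProdProdComm X X Y Y))
      (p.prod q) (p'.prod q') := by
  constructor
  · rw [Measure.map_map measurable_fst (MeasurableEquiv.measurable _), ← hX.1, ← hY.1,
      Measure.map_prod_map _ _ measurable_fst measurable_fst]
    rfl
  · rw [Measure.map_map measurable_snd (MeasurableEquiv.measurable _), ← hX.2, ← hY.2,
      Measure.map_prod_map _ _ measurable_snd measurable_snd]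
    rfl

theorem ae_map_prodProdProdComm_prod {R : X → X → Prop} {S : Y → Y → Prop}
    (hR : ∀ᵐ z ∂rX, R z.1 z.2) (hS : ∀ᵐ z ∂rY, S z.1 z.2) :
    ∀ᵐ w ∂(rX.prod rY).map (MeasurableEquiv.prodProdProdComm X X Y Y),
      R w.1.1 w.2.1 ∧ S w.1.2 w.2.2 := by
  rw [(MeasurableEquiv.measurableEmbedding _).ae_map_iff]
  filter_upwards [Measure.quasiMeasurePreserving_fst.ae hR,
    Measure.quasiMeasurePreserving_snd.ae hS] with z hRz hSz
  exact ⟨hRz, hSz⟩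

end

theorem prod_measure_stochastic_order_monotone_general
    {X Y : Type*}
    [PartialOrder X] [MeasurableSpace X]
    [PartialOrder Y] [MeasurableSpace Y]
    (p p' : Measure X) (q q' : Measure Y)
    [IsProbabilityMeasure p]
    [IsProbabilityMeasure q]
    (hcoupX : ∃ r : Measure (X × X), IsCoupling r p p' ∧ r {z : X × X | z.1 ≤ z.2}ᶜ = 0)
    (hcoupY : ∃ r : Measure (Y × Y), IsCoupling r q q' ∧ r {z : Y × Y | z.1 ≤ z.2}ᶜ = 0) :
    ∃ r : Measure ((X × Y) × (X × Y)), IsCoupling r (p.prod q) (p'.prod q') ∧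
      r {z : (X × Y) × (X × Y) | z.1.1 ≤ z.2.1 ∧ z.1.2 ≤ z.2.2}ᶜ = 0 := by
  obtain ⟨rX, hrX, hX⟩ := hcoupX
  obtain ⟨rY, hrY, hY⟩ := hcoupY
  have := hrX.isProbabilityMeasure
  have := hrY.isProbabilityMeasure
  exact ⟨_, hrX.map_prodProdProdComm_prod hrY,
    ae_map_prodProdProdComm_prod (R := (· ≤ ·)) (S := (· ≤ ·)) hX hY⟩

/-- Monotonicity of product measures: on L-ordered complete metric spaces `X` and `Y`
(with `X × Y` carrying the product order), if `p ≤ p'` and `q ≤ q'` in the stochastic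
order, then `p ⊗ q ≤ p' ⊗ q'` in the stochastic order on `X × Y`. -/
theorem prod_measure_stochastic_order_monotone
    {X Y : Type*}
    [MetricSpace X] [PartialOrder X] [CompleteSpace X] [MeasurableSpace X] [BorelSpace X]
    [MetricSpace Y] [PartialOrder Y] [CompleteSpace Y] [MeasurableSpace Y] [BorelSpace Y]
    (hLX : ∀ x y : X, x ≤ y ↔ ∀ f : X → ℝ, Monotone f → LipschitzWith 1 f → f x ≤ f y)
    (hLY : ∀ x y : Y, x ≤ y ↔ ∀ f : Y → ℝ, Monotone f → LipschitzWith 1 f → f x ≤ f y)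
    (p p' : Measure X) (q q' : Measure Y)
    [IsProbabilityMeasure p] [IsProbabilityMeasure p']
    [IsProbabilityMeasure q] [IsProbabilityMeasure q']
    (hpR : p.InnerRegular) (hp'R : p'.InnerRegular)
    (hqR : q.InnerRegular) (hq'R : q'.InnerRegular)
    (hpM : ∀ x₀ : X, Integrable (fun x => dist x x₀) p)
    (hp'M : ∀ x₀ : X, Integrable (fun x => dist x x₀) p')
    (hqM : ∀ y₀ : Y, Integrable (fun y => dist y y₀) q)
    (hq'M : ∀ y₀ : Y, Integrable (fun y => dist y y₀) q')
    (hcoupX : ∃ r : Measure (X × X), IsCoupling r p p' ∧ r {z : X × X | z.1 ≤ z.2}ᶜ = 0)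
    (hcoupY : ∃ r : Measure (Y × Y), IsCoupling r q q' ∧ r {z : Y × Y | z.1 ≤ z.2}ᶜ = 0) :
    ∃ r : Measure ((X × Y) × (X × Y)), IsCoupling r (p.prod q) (p'.prod q') ∧
      r {z : (X × Y) × (X × Y) | z.1.1 ≤ z.2.1 ∧ z.1.2 ≤ z.2.2}ᶜ = 0 :=
  prod_measure_stochastic_order_monotone_general p p' q q' hcoupX hcoupY
end
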